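/- Let G be a group acting on a set X, let s₁, s₂ ∈ G, set s₀ := s₁ * s₂, and assume s₀² = 1, s₀ ≠ 1, s₁² ≠ 1, s₂² ≠ 1 and that the cyclic subgroups ⟨s₀⟩, ⟨s₁⟩, ⟨s₂⟩ intersect pairwise trivially. Let v ∈ X have trivial stabilizer, and define e₀, e₁, e₂ and F₂⁰ := {e₀, e₁, s₁ • e₂}, F₂¹ := {s₁ᵏ • e₁ : k ∈ ℤ}, F₂² := {s₂ᵏ • e₂ : k ∈ ℤ}. Call a set F of subsets of X a face if F = g • F₂^i for some g ∈ G and i ∈ {0,1,2}. Then: (a) the faces containing e₀ as an element are exactly F₂⁰ and s₀ • F₂⁰, and these are distinct; (b) the faces containing e₁ are exactly F₂¹ and F₂⁰, and these are distinct; (c) the faces containing e₂ are exactly F₂² and s₁⁻¹ • F₂⁰, and these are distinct. In particular each base edge of the snub S_P(v) lies in exactly two faces. -/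

import Mathlib

open Pointwise

/-- The base edges of the snub: `e₀ = {v, (s₁s₂)•v}`, `e₁ = {v, s₁•v}`, `e₂ = {v, s₂•v}`. -/
def snubBaseEdge {G X : Type*} [Group G] [MulAction G X] (s₁ s₂ : G) (v : X) :
    Fin 3 → Set X :=
  ![{v, (s₁ * s₂) • v}, {v, s₁ • v}, {v, s₂ • v}]

/-- The base faces of the snub: `F₂⁰ = {e₀, e₁, s₁ • e₂}`, `F₂¹ = {s₁ᵏ • e₁ : k ∈ ℤ}`,
`F₂² = {s₂ᵏ • e₂ : k ∈ ℤ}`. -/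
def snubBaseFace {G X : Type*} [Group G] [MulAction G X] (s₁ s₂ : G) (v : X) :
    Fin 3 → Set (Set X) :=
  ![{snubBaseEdge s₁ s₂ v 0, snubBaseEdge s₁ s₂ v 1, s₁ • snubBaseEdge s₁ s₂ v 2},
    {E | ∃ k : ℤ, E = s₁ ^ k • snubBaseEdge s₁ s₂ v 1},
    {E | ∃ k : ℤ, E = s₂ ^ k • snubBaseEdge s₁ s₂ v 2}]

/-!
Since the stabilizer of `v` is trivial, `g ↦ g • v` is injective, so an edge `{a • v, (a * t) • v}`
determines its label `t` up to inversion, and translating the edge does not change the label. The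
edges of a translate of `F₂⁰` carry the labels `s₀, s₁, s₂`, those of a translate of `F₂¹` (resp.
`F₂²`) the labels `s₁^{±1}` (resp. `s₂^{±1}`). The hypotheses make `s₀, s₁^{±1}, s₂^{±1}` pairwise
distinct with `s₀ = s₀⁻¹`, so a base edge `eⱼ` lies only in translates of `F₂⁰` and `F₂ʲ`, and
comparing endpoints determines the translating element.
-/

open MulAction Subgroup

section OrbitEdge

variable {G X : Type*} [Group G] [MulAction G X]

lemma ne_of_mem_zpowers_of_inf_zpowers_eq_bot {a b c : G}
    (h : zpowers a ⊓ zpowers b = ⊥) (ha : a ≠ 1) (hc : c ∈ zpowers b) : a ≠ c := by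
  rintro rfl
  exact ha (mem_bot.mp (h ▸ mem_inf.mpr ⟨mem_zpowers a, hc⟩))

lemma smul_orbit_of_mem {H : Subgroup G} {g : G} (hg : g ∈ H) (x : X) :
    g • orbit H x = orbit H x :=
  smul_orbit (⟨g, hg⟩ : H) x

def orbitEdge (v : X) (a t : G) : Set X := {a • v, (a * t) • v}

lemma smul_orbitEdge (v : X) (g a t : G) : g • orbitEdge v a t = orbitEdge v (g * a) t := by
  simp [orbitEdge, Set.smul_set_insert, Set.smul_set_singleton, mul_smul]

lemma orbitEdge_eq_mul_inv (v : X) (a t : G) : orbitEdge v a t = orbitEdge v (a * t) t⁻¹ := by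
  simp [orbitEdge, Set.pair_comm]

lemma orbitEdge_eq_orbitEdge_iff {v : X} (hv : ∀ g : G, g • v = v → g = 1) {a t b u : G} :
    orbitEdge v a t = orbitEdge v b u ↔ (b = a ∧ u = t) ∨ (b = a * t ∧ u = t⁻¹) := by
  have hinj : ∀ p q : G, p • v = q • v ↔ p = q := fun p q =>
    ⟨fun h => (inv_mul_eq_one.mp (hv _ (by rw [mul_smul, h, inv_smul_smul]))).symm,
      congrArg (· • v)⟩
  simp only [orbitEdge, Set.pair_eq_pair_iff, hinj]
  constructor
  · rintro (⟨rfl, h⟩ | ⟨h, rfl⟩)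
    · exact Or.inl ⟨rfl, mul_left_cancel h.symm⟩
    · refine Or.inr ⟨rfl, eq_inv_of_mul_eq_one_right (mul_left_cancel (a := a) ?_)⟩
      rw [mul_one, ← mul_assoc]
      exact h.symm
  · rintro (⟨rfl, rfl⟩ | ⟨rfl, rfl⟩)
    · exact Or.inl ⟨rfl, rfl⟩
    · exact Or.inr ⟨by simp, rfl⟩

lemma orbitEdge_one_mem_smul_orbit_zpowers_iff {v : X} (hv : ∀ g : G, g • v = v → g = 1)
    {g s t : G} :
    orbitEdge v 1 t ∈ g • orbit (zpowers s) (orbitEdge v 1 s) ↔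
      g ∈ zpowers s ∧ (t = s ∨ t = s⁻¹) := by
  constructor
  · rintro ⟨_, ⟨⟨h, hh⟩, rfl⟩, he⟩
    dsimp only at he
    rw [Submonoid.smul_def, smul_orbitEdge, smul_orbitEdge, mul_one, eq_comm,
      orbitEdge_eq_orbitEdge_iff hv] at he
    rw [← mul_mem_cancel_right hh]
    rcases he with ⟨hgh, rfl⟩ | ⟨hgh, rfl⟩
    · exact ⟨hgh ▸ one_mem _, Or.inl rfl⟩
    · refine ⟨?_, Or.inr (inv_inv t).symm⟩
      rw [hgh, one_mul, zpowers_inv]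
      exact mem_zpowers t
  · rintro ⟨hg, rfl | rfl⟩
    all_goals rw [smul_orbit_of_mem hg]
    · exact mem_orbit_self _
    · rw [orbitEdge_eq_mul_inv v 1 s⁻¹, one_mul, inv_inv, ← mul_one s⁻¹, ← smul_orbitEdge]
      exact mem_orbit _ (⟨s⁻¹, inv_mem (mem_zpowers s)⟩ : zpowers s)

end OrbitEdge

section Snub

variable {G X : Type*} [Group G] [MulAction G X]

/-- The field names write `s₀` for `s₁ * s₂`. -/
structure SnubEdgeLabelsDistinct (s₁ s₂ : G) : Prop where
  s₀_inv_eq : (s₁ * s₂)⁻¹ = s₁ * s₂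
  s₀_ne_one : s₁ * s₂ ≠ 1
  s₁_ne_inv : s₁ ≠ s₁⁻¹
  s₂_ne_inv : s₂ ≠ s₂⁻¹
  s₀_ne_s₁ : s₁ * s₂ ≠ s₁
  s₀_ne_inv_s₁ : s₁ * s₂ ≠ s₁⁻¹
  s₀_ne_s₂ : s₁ * s₂ ≠ s₂
  s₀_ne_inv_s₂ : s₁ * s₂ ≠ s₂⁻¹
  s₁_ne_s₂ : s₁ ≠ s₂
  s₁_ne_inv_s₂ : s₁ ≠ s₂⁻¹

lemma SnubEdgeLabelsDistinct.of_zpowers_inf_eq_bot {s₁ s₂ : G} (h0 : (s₁ * s₂) ^ 2 = 1)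
    (hs0 : s₁ * s₂ ≠ 1) (h1 : s₁ ^ 2 ≠ 1) (h2 : s₂ ^ 2 ≠ 1)
    (h01 : zpowers (s₁ * s₂) ⊓ zpowers s₁ = ⊥) (h02 : zpowers (s₁ * s₂) ⊓ zpowers s₂ = ⊥)
    (h12 : zpowers s₁ ⊓ zpowers s₂ = ⊥) : SnubEdgeLabelsDistinct s₁ s₂ := by
  have ne_inv {s : G} (h : s ^ 2 ≠ 1) : s ≠ s⁻¹ := by
    rwa [ne_eq, ← mul_eq_one_iff_eq_inv, ← sq]
  have hs1 : s₁ ≠ 1 := by rintro rfl; exact h1 (one_pow 2)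
  exact
    { s₀_inv_eq := inv_eq_of_mul_eq_one_right ((sq _).symm.trans h0)
      s₀_ne_one := hs0
      s₁_ne_inv := ne_inv h1
      s₂_ne_inv := ne_inv h2
      s₀_ne_s₁ := ne_of_mem_zpowers_of_inf_zpowers_eq_bot h01 hs0 (mem_zpowers _)
      s₀_ne_inv_s₁ := ne_of_mem_zpowers_of_inf_zpowers_eq_bot h01 hs0 (inv_mem (mem_zpowers _))
      s₀_ne_s₂ := ne_of_mem_zpowers_of_inf_zpowers_eq_bot h02 hs0 (mem_zpowers _)
      s₀_ne_inv_s₂ := ne_of_mem_zpowers_of_inf_zpowers_eq_bot h02 hs0 (inv_mem (mem_zpowers _))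
      s₁_ne_s₂ := ne_of_mem_zpowers_of_inf_zpowers_eq_bot h12 hs1 (mem_zpowers _)
      s₁_ne_inv_s₂ := ne_of_mem_zpowers_of_inf_zpowers_eq_bot h12 hs1 (inv_mem (mem_zpowers _)) }

lemma SnubEdgeLabelsDistinct.s₂_ne_inv_s₁ {s₁ s₂ : G} (hs : SnubEdgeLabelsDistinct s₁ s₂) :
    s₂ ≠ s₁⁻¹ :=
  fun h => hs.s₁_ne_inv_s₂ (inv_eq_iff_eq_inv.mp h.symm)

variable (s₁ s₂ : G) (v : X)

lemma snubBaseEdge_zero : snubBaseEdge s₁ s₂ v 0 = orbitEdge v 1 (s₁ * s₂) := by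
  simp [snubBaseEdge, orbitEdge]

lemma snubBaseEdge_one : snubBaseEdge s₁ s₂ v 1 = orbitEdge v 1 s₁ := by
  simp [snubBaseEdge, orbitEdge]

lemma snubBaseEdge_two : snubBaseEdge s₁ s₂ v 2 = orbitEdge v 1 s₂ := by
  simp [snubBaseEdge, orbitEdge]

lemma mem_smul_snubBaseFace_zero {g : G} {E : Set X} :
    E ∈ g • snubBaseFace s₁ s₂ v 0 ↔
      E = orbitEdge v g (s₁ * s₂) ∨ E = orbitEdge v g s₁ ∨ E = orbitEdge v (g * s₁) s₂ := by
  simp [snubBaseFace, snubBaseEdge_zero, snubBaseEdge_one, snubBaseEdge_two, smul_orbitEdge,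
    Set.smul_set_insert, Set.smul_set_singleton]

lemma snubBaseFace_one : snubBaseFace s₁ s₂ v 1 = orbit (zpowers s₁) (orbitEdge v 1 s₁) := by
  ext E
  constructor
  · rintro ⟨k, rfl⟩
    exact ⟨⟨s₁ ^ k, k, rfl⟩, by rw [snubBaseEdge_one]; rfl⟩
  · rintro ⟨⟨_, k, rfl⟩, rfl⟩
    exact ⟨k, by rw [snubBaseEdge_one]; rfl⟩

lemma snubBaseFace_two : snubBaseFace s₁ s₂ v 2 = orbit (zpowers s₂) (orbitEdge v 1 s₂) := by
  ext E
  constructor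
  · rintro ⟨k, rfl⟩
    exact ⟨⟨s₂ ^ k, k, rfl⟩, by rw [snubBaseEdge_two]; rfl⟩
  · rintro ⟨⟨_, k, rfl⟩, rfl⟩
    exact ⟨k, by rw [snubBaseEdge_two]; rfl⟩

variable {s₁ s₂ v}

lemma snubBaseEdge_zero_mem_snubBaseFace_zero : snubBaseEdge s₁ s₂ v 0 ∈ snubBaseFace s₁ s₂ v 0 :=
  Set.mem_insert _ _

lemma snubBaseEdge_one_mem_snubBaseFace_zero : snubBaseEdge s₁ s₂ v 1 ∈ snubBaseFace s₁ s₂ v 0 :=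
  Set.mem_insert_of_mem _ (Set.mem_insert _ _)

lemma snubBaseEdge_zero_mem_smul_snubBaseFace_zero_iff (hv : ∀ g : G, g • v = v → g = 1)
    (hs : SnubEdgeLabelsDistinct s₁ s₂) {g : G} :
    snubBaseEdge s₁ s₂ v 0 ∈ g • snubBaseFace s₁ s₂ v 0 ↔ g = 1 ∨ g = s₁ * s₂ := by
  simp [snubBaseEdge_zero, mem_smul_snubBaseFace_zero, orbitEdge_eq_orbitEdge_iff hv,
    hs.s₀_inv_eq, hs.s₀_ne_s₁.symm, hs.s₀_ne_s₂.symm]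

lemma snubBaseEdge_one_mem_smul_snubBaseFace_zero_iff (hv : ∀ g : G, g • v = v → g = 1)
    (hs : SnubEdgeLabelsDistinct s₁ s₂) {g : G} :
    snubBaseEdge s₁ s₂ v 1 ∈ g • snubBaseFace s₁ s₂ v 0 ↔ g = 1 := by
  simp only [snubBaseEdge_one, mem_smul_snubBaseFace_zero, orbitEdge_eq_orbitEdge_iff hv, one_mul,
    hs.s₀_ne_s₁, hs.s₀_ne_inv_s₁, hs.s₁_ne_inv, hs.s₁_ne_s₂.symm, hs.s₂_ne_inv_s₁,
    and_true, and_false, or_false, false_or]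

lemma snubBaseEdge_two_mem_smul_snubBaseFace_zero_iff (hv : ∀ g : G, g • v = v → g = 1)
    (hs : SnubEdgeLabelsDistinct s₁ s₂) {g : G} :
    snubBaseEdge s₁ s₂ v 2 ∈ g • snubBaseFace s₁ s₂ v 0 ↔ g = s₁⁻¹ := by
  simp only [snubBaseEdge_two, mem_smul_snubBaseFace_zero, orbitEdge_eq_orbitEdge_iff hv, one_mul,
    hs.s₀_ne_s₂, hs.s₀_ne_inv_s₂, hs.s₂_ne_inv, hs.s₁_ne_s₂, hs.s₁_ne_inv_s₂,
    mul_eq_one_iff_eq_inv, and_true, and_false, or_false, false_or]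

lemma snubBaseEdge_zero_notMem_smul_snubBaseFace_one (hv : ∀ g : G, g • v = v → g = 1)
    (hs : SnubEdgeLabelsDistinct s₁ s₂) (g : G) :
    snubBaseEdge s₁ s₂ v 0 ∉ g • snubBaseFace s₁ s₂ v 1 := by
  rw [snubBaseEdge_zero, snubBaseFace_one, orbitEdge_one_mem_smul_orbit_zpowers_iff hv]
  simp only [hs.s₀_ne_s₁, hs.s₀_ne_inv_s₁, or_self, and_false, not_false_eq_true]

lemma snubBaseEdge_zero_notMem_smul_snubBaseFace_two (hv : ∀ g : G, g • v = v → g = 1)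
    (hs : SnubEdgeLabelsDistinct s₁ s₂) (g : G) :
    snubBaseEdge s₁ s₂ v 0 ∉ g • snubBaseFace s₁ s₂ v 2 := by
  rw [snubBaseEdge_zero, snubBaseFace_two, orbitEdge_one_mem_smul_orbit_zpowers_iff hv]
  simp only [hs.s₀_ne_s₂, hs.s₀_ne_inv_s₂, or_self, and_false, not_false_eq_true]

lemma setOf_faces_containing_snubBaseEdge_zero (hv : ∀ g : G, g • v = v → g = 1)
    (hs : SnubEdgeLabelsDistinct s₁ s₂) :
    {F : Set (Set X) | (∃ g : G, ∃ i : Fin 3, F = g • snubBaseFace s₁ s₂ v i) ∧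
        snubBaseEdge s₁ s₂ v 0 ∈ F} =
      {snubBaseFace s₁ s₂ v 0, (s₁ * s₂) • snubBaseFace s₁ s₂ v 0} := by
  ext F
  constructor
  · rintro ⟨⟨g, i, rfl⟩, he⟩
    match i with
    | 0 =>
      rcases (snubBaseEdge_zero_mem_smul_snubBaseFace_zero_iff hv hs).1 he with rfl | rfl
      · exact Or.inl (one_smul _ _)
      · exact Or.inr rfl
    | 1 => exact absurd he (snubBaseEdge_zero_notMem_smul_snubBaseFace_one hv hs g)
    | 2 => exact absurd he (snubBaseEdge_zero_notMem_smul_snubBaseFace_two hv hs g)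
  · rintro (rfl | rfl)
    · exact ⟨⟨1, 0, (one_smul _ _).symm⟩, snubBaseEdge_zero_mem_snubBaseFace_zero⟩
    · exact ⟨⟨_, 0, rfl⟩, (snubBaseEdge_zero_mem_smul_snubBaseFace_zero_iff hv hs).2 (Or.inr rfl)⟩

lemma setOf_faces_containing_snubBaseEdge_one (hv : ∀ g : G, g • v = v → g = 1)
    (hs : SnubEdgeLabelsDistinct s₁ s₂) :
    {F : Set (Set X) | (∃ g : G, ∃ i : Fin 3, F = g • snubBaseFace s₁ s₂ v i) ∧
        snubBaseEdge s₁ s₂ v 1 ∈ F} =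
      {snubBaseFace s₁ s₂ v 1, snubBaseFace s₁ s₂ v 0} := by
  ext F
  constructor
  · rintro ⟨⟨g, i, rfl⟩, he⟩
    match i with
    | 0 =>
      rw [(snubBaseEdge_one_mem_smul_snubBaseFace_zero_iff hv hs).1 he, one_smul]
      exact Or.inr rfl
    | 1 =>
      rw [snubBaseEdge_one, snubBaseFace_one, orbitEdge_one_mem_smul_orbit_zpowers_iff hv] at he
      rw [snubBaseFace_one, smul_orbit_of_mem he.1]
      exact Or.inl rfl
    | 2 =>
      rw [snubBaseEdge_one, snubBaseFace_two, orbitEdge_one_mem_smul_orbit_zpowers_iff hv] at he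
      simp only [hs.s₁_ne_s₂, hs.s₁_ne_inv_s₂, or_self, and_false] at he
  · rintro (rfl | rfl)
    · refine ⟨⟨1, 1, (one_smul _ _).symm⟩, ?_⟩
      rw [snubBaseEdge_one, snubBaseFace_one]
      exact mem_orbit_self _
    · exact ⟨⟨1, 0, (one_smul _ _).symm⟩, snubBaseEdge_one_mem_snubBaseFace_zero⟩

lemma setOf_faces_containing_snubBaseEdge_two (hv : ∀ g : G, g • v = v → g = 1)
    (hs : SnubEdgeLabelsDistinct s₁ s₂) :
    {F : Set (Set X) | (∃ g : G, ∃ i : Fin 3, F = g • snubBaseFace s₁ s₂ v i) ∧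
        snubBaseEdge s₁ s₂ v 2 ∈ F} =
      {snubBaseFace s₁ s₂ v 2, s₁⁻¹ • snubBaseFace s₁ s₂ v 0} := by
  ext F
  constructor
  · rintro ⟨⟨g, i, rfl⟩, he⟩
    match i with
    | 0 =>
      rw [(snubBaseEdge_two_mem_smul_snubBaseFace_zero_iff hv hs).1 he]
      exact Or.inr rfl
    | 1 =>
      rw [snubBaseEdge_two, snubBaseFace_one, orbitEdge_one_mem_smul_orbit_zpowers_iff hv] at he
      simp only [hs.s₁_ne_s₂.symm, hs.s₂_ne_inv_s₁, or_self, and_false] at he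
    | 2 =>
      rw [snubBaseEdge_two, snubBaseFace_two, orbitEdge_one_mem_smul_orbit_zpowers_iff hv] at he
      rw [snubBaseFace_two, smul_orbit_of_mem he.1]
      exact Or.inl rfl
  · rintro (rfl | rfl)
    · refine ⟨⟨1, 2, (one_smul _ _).symm⟩, ?_⟩
      rw [snubBaseEdge_two, snubBaseFace_two]
      exact mem_orbit_self _
    · exact ⟨⟨_, 0, rfl⟩, (snubBaseEdge_two_mem_smul_snubBaseFace_zero_iff hv hs).2 rfl⟩

lemma snubBaseFace_zero_ne_smul (hv : ∀ g : G, g • v = v → g = 1)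
    (hs : SnubEdgeLabelsDistinct s₁ s₂) :
    snubBaseFace s₁ s₂ v 0 ≠ (s₁ * s₂) • snubBaseFace s₁ s₂ v 0 := by
  intro h
  have he : snubBaseEdge s₁ s₂ v 1 ∈ (s₁ * s₂) • snubBaseFace s₁ s₂ v 0 :=
    h ▸ snubBaseEdge_one_mem_snubBaseFace_zero
  exact hs.s₀_ne_one ((snubBaseEdge_one_mem_smul_snubBaseFace_zero_iff hv hs).1 he)

lemma snubBaseFace_one_ne_zero (hv : ∀ g : G, g • v = v → g = 1)
    (hs : SnubEdgeLabelsDistinct s₁ s₂) : snubBaseFace s₁ s₂ v 1 ≠ snubBaseFace s₁ s₂ v 0 := by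
  intro h
  apply snubBaseEdge_zero_notMem_smul_snubBaseFace_one hv hs 1
  rw [one_smul, h]
  exact snubBaseEdge_zero_mem_snubBaseFace_zero

lemma snubBaseFace_two_ne_inv_smul_zero (hv : ∀ g : G, g • v = v → g = 1)
    (hs : SnubEdgeLabelsDistinct s₁ s₂) :
    snubBaseFace s₁ s₂ v 2 ≠ s₁⁻¹ • snubBaseFace s₁ s₂ v 0 := by
  intro h
  apply snubBaseEdge_zero_notMem_smul_snubBaseFace_two hv hs s₁
  rw [h, smul_inv_smul]
  exact snubBaseEdge_zero_mem_snubBaseFace_zero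

end Snub

/-- Each base edge of the snub lies in exactly two faces: the faces containing `e₀` are
exactly `F₂⁰` and `s₀ • F₂⁰`; the faces containing `e₁` are exactly `F₂¹` and `F₂⁰`; and the
faces containing `e₂` are exactly `F₂²` and `s₁⁻¹ • F₂⁰`; in each case the two faces are
distinct. -/
theorem snub_base_edge_in_exactly_two_faces {G X : Type*} [Group G] [MulAction G X]
    (s₁ s₂ : G) (h0 : (s₁ * s₂) ^ 2 = 1) (hs0 : s₁ * s₂ ≠ 1)
    (h1 : s₁ ^ 2 ≠ 1) (h2 : s₂ ^ 2 ≠ 1)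
    (h01 : Subgroup.zpowers (s₁ * s₂) ⊓ Subgroup.zpowers s₁ = ⊥)
    (h02 : Subgroup.zpowers (s₁ * s₂) ⊓ Subgroup.zpowers s₂ = ⊥)
    (h12 : Subgroup.zpowers s₁ ⊓ Subgroup.zpowers s₂ = ⊥)
    (v : X) (hv : ∀ g : G, g • v = v → g = 1) :
    ({F : Set (Set X) | (∃ g : G, ∃ i : Fin 3, F = g • snubBaseFace s₁ s₂ v i) ∧
        snubBaseEdge s₁ s₂ v 0 ∈ F} =
      {snubBaseFace s₁ s₂ v 0, (s₁ * s₂) • snubBaseFace s₁ s₂ v 0} ∧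
      snubBaseFace s₁ s₂ v 0 ≠ (s₁ * s₂) • snubBaseFace s₁ s₂ v 0) ∧
    ({F : Set (Set X) | (∃ g : G, ∃ i : Fin 3, F = g • snubBaseFace s₁ s₂ v i) ∧
        snubBaseEdge s₁ s₂ v 1 ∈ F} =
      {snubBaseFace s₁ s₂ v 1, snubBaseFace s₁ s₂ v 0} ∧
      snubBaseFace s₁ s₂ v 1 ≠ snubBaseFace s₁ s₂ v 0) ∧
    ({F : Set (Set X) | (∃ g : G, ∃ i : Fin 3, F = g • snubBaseFace s₁ s₂ v i) ∧
        snubBaseEdge s₁ s₂ v 2 ∈ F} =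
      {snubBaseFace s₁ s₂ v 2, s₁⁻¹ • snubBaseFace s₁ s₂ v 0} ∧
      snubBaseFace s₁ s₂ v 2 ≠ s₁⁻¹ • snubBaseFace s₁ s₂ v 0) := by
  have hs := SnubEdgeLabelsDistinct.of_zpowers_inf_eq_bot h0 hs0 h1 h2 h01 h02 h12
  exact ⟨⟨setOf_faces_containing_snubBaseEdge_zero hv hs, snubBaseFace_zero_ne_smul hv hs⟩,
    ⟨setOf_faces_containing_snubBaseEdge_one hv hs, snubBaseFace_one_ne_zero hv hs⟩,
    ⟨setOf_faces_containing_snubBaseEdge_two hv hs, snubBaseFace_two_ne_inv_smul_zero hv hs⟩⟩
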